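/- arXiv:1507.00613 — 2 statements merged into one kernel-verified Lean document; each statement's English description precedes it below -/
import Mathlib

section
/- Let (X,·,d) be a group which is metric invariant, with identity element e. Then: (i) if f and g are Katetov maps on X, so is f ⊕ g; (ii) (𝒦(X), ⊕) is a monoid whose identity element is δ_e = d(e,·), and it is commutative whenever X is commutative; (iii) for all f,g,h ∈ 𝒦(X), d_∞(f ⊕ g, h ⊕ g) ≤ d_∞(f,h) and d_∞(g ⊕ f, g ⊕ h) ≤ d_∞(f,h). -/
/-- The inf-convolution of two real-valued functions on a group:
`(f ⊕ g)(x) = inf { f y + g z : y * z = x }`. -/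
noncomputable def infConv {X : Type*} [Mul X] (f g : X → ℝ) : X → ℝ :=
  fun x => sInf {r : ℝ | ∃ y z : X, y * z = x ∧ r = f y + g z}

/-- A Katetov map: `|f x − f y| ≤ d(x,y) ≤ f x + f y` for all `x, y`. -/
def IsKatetov {X : Type*} [MetricSpace X] (f : X → ℝ) : Prop :=
  ∀ x y : X, |f x - f y| ≤ dist x y ∧ dist x y ≤ f x + f y

/-- The sup-metric `d_∞(f,g) = sup_x |f x − g x|`. -/
noncomputable def dInf {X : Type*} (f g : X → ℝ) : ℝ :=
  ⨆ x : X, |f x - g x|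

/-!
On a metric invariant group, the triangle inequality through `a' * b` gives
`d(a * b, a' * b') ≤ d(a, a') + d(b, b')`; applied to splittings `x = y * z`, `x' = y' * z'`
this yields `d(x, x') ≤ (f ⊕ g)(x) + (f ⊕ g)(x')`. For the `1`-Lipschitz bound, a splitting
`x' = y * z` is transported to the splitting `x = y * (y⁻¹ * x)`, whose second factor lies at
distance `d(x, x')` from `z`. Everything else only uses that `⊕` is an infimum of nonnegative
sums over splittings, and `δ_e` is neutral because `d(e, y) = d(z, x)` whenever `y * z = x`.
-/

section InfConv

variable {X : Type*} {f g h : X → ℝ}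

lemma infConv_le [Mul X] (hf : 0 ≤ f) (hg : 0 ≤ g) {x y z : X} (hyz : y * z = x) :
    infConv f g x ≤ f y + g z :=
  csInf_le ⟨0, by rintro r ⟨y, z, -, rfl⟩; exact add_nonneg (hf y) (hg z)⟩ ⟨y, z, hyz, rfl⟩

lemma le_infConv [MulOneClass X] {x : X} {c : ℝ} (H : ∀ y z, y * z = x → c ≤ f y + g z) :
    c ≤ infConv f g x :=
  le_csInf ⟨f 1 + g x, 1, x, one_mul x, rfl⟩ (by rintro r ⟨y, z, hyz, rfl⟩; exact H y z hyz)

lemma infConv_nonneg [MulOneClass X] (hf : 0 ≤ f) (hg : 0 ≤ g) : 0 ≤ infConv f g :=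
  fun _ => le_infConv fun y z _ => add_nonneg (hf y) (hg z)

lemma infConv_assoc [Monoid X] (hf : 0 ≤ f) (hg : 0 ≤ g) (hh : 0 ≤ h) :
    infConv (infConv f g) h = infConv f (infConv g h) := by
  funext x
  apply le_antisymm
  · refine le_infConv fun y w hyw => ?_
    have : infConv (infConv f g) h x - f y ≤ infConv g h w := le_infConv fun z u hzu => by
      have := infConv_le (infConv_nonneg hf hg) hh
        (show y * z * u = x by rw [mul_assoc, hzu, hyw])
      linarith [infConv_le hf hg (rfl : y * z = y * z)]
    linarith
  · refine le_infConv fun w u hwu => ?_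
    have : infConv f (infConv g h) x - h u ≤ infConv f g w := le_infConv fun y z hyz => by
      have := infConv_le hf (infConv_nonneg hg hh)
        (show y * (z * u) = x by rw [← mul_assoc, hyz, hwu])
      linarith [infConv_le hg hh (rfl : z * u = z * u)]
    linarith

lemma infConv_comm [Mul X] (hc : ∀ x y : X, x * y = y * x) (f g : X → ℝ) :
    infConv f g = infConv g f := by
  have swap : ∀ (f g : X → ℝ) (x : X), {r | ∃ y z, y * z = x ∧ r = f y + g z} ⊆
      {r | ∃ y z, y * z = x ∧ r = g y + f z} := by
    rintro f g x r ⟨y, z, rfl, rfl⟩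
    exact ⟨z, y, hc z y, add_comm _ _⟩
  funext x
  exact congrArg sInf ((swap f g x).antisymm (swap g f x))

lemma infConv_le_infConv_add_of_le_add_left [MulOneClass X] {c : ℝ} (hf : 0 ≤ f) (hg : 0 ≤ g)
    (hfh : ∀ y, f y ≤ h y + c) (x : X) : infConv f g x ≤ infConv h g x + c := by
  have : infConv f g x - c ≤ infConv h g x := le_infConv fun y z hyz => by
    linarith [infConv_le hf hg hyz, hfh y]
  linarith

lemma infConv_le_infConv_add_of_le_add_right [MulOneClass X] {c : ℝ} (hg : 0 ≤ g) (hf : 0 ≤ f)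
    (hfh : ∀ z, f z ≤ h z + c) (x : X) : infConv g f x ≤ infConv g h x + c := by
  have : infConv g f x - c ≤ infConv g h x := le_infConv fun y z hyz => by
    linarith [infConv_le hg hf hyz, hfh z]
  linarith

end InfConv

section dInf

variable {X : Type*} {f h : X → ℝ}

lemma abs_sub_le_dInf (hfh : BddAbove (Set.range fun x => |f x - h x|)) (x : X) :
    |f x - h x| ≤ dInf f h :=
  le_ciSup hfh x

lemma dInf_le [Nonempty X] {c : ℝ} (H : ∀ x, |f x - h x| ≤ c) : dInf f h ≤ c :=
  ciSup_le H

end dInf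

section Katetov

variable {X : Type*} [MetricSpace X] {f g h : X → ℝ}

lemma IsKatetov.nonneg (hf : IsKatetov f) : 0 ≤ f := fun x =>
  show 0 ≤ f x by linarith [(hf x x).2, dist_self x]

lemma IsKatetov.sub_le (hf : IsKatetov f) (x y : X) : f x - f y ≤ dist x y :=
  (abs_sub_le_iff.1 (hf x y).1).1

lemma IsKatetov.bddAbove_abs_sub [Nonempty X] (hf : IsKatetov f) (hh : IsKatetov h) :
    BddAbove (Set.range fun x => |f x - h x|) := by
  obtain ⟨a⟩ := ‹Nonempty X›
  refine ⟨f a + h a, ?_⟩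
  rintro _ ⟨x, rfl⟩
  rw [abs_sub_le_iff]
  constructor <;> linarith [hf.sub_le x a, hh.sub_le x a, (hf x a).2, (hh x a).2]

lemma dInf_infConv_right_le [MulOneClass X] (hf : IsKatetov f) (hg : 0 ≤ g)
    (hh : IsKatetov h) : dInf (infConv f g) (infConv h g) ≤ dInf f h := by
  have hfh := abs_sub_le_dInf (hf.bddAbove_abs_sub hh)
  refine dInf_le fun x => abs_sub_le_iff.2 ⟨?_, ?_⟩
  · linarith [infConv_le_infConv_add_of_le_add_left (h := h) hf.nonneg hg
      (fun y => by linarith [(abs_sub_le_iff.1 (hfh y)).1]) x]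
  · linarith [infConv_le_infConv_add_of_le_add_left (h := f) hh.nonneg hg
      (fun y => by linarith [(abs_sub_le_iff.1 (hfh y)).2]) x]

lemma dInf_infConv_left_le [MulOneClass X] (hf : IsKatetov f) (hg : 0 ≤ g)
    (hh : IsKatetov h) : dInf (infConv g f) (infConv g h) ≤ dInf f h := by
  have hfh := abs_sub_le_dInf (hf.bddAbove_abs_sub hh)
  refine dInf_le fun x => abs_sub_le_iff.2 ⟨?_, ?_⟩
  · linarith [infConv_le_infConv_add_of_le_add_right (h := h) hg hf.nonneg
      (fun z => by linarith [(abs_sub_le_iff.1 (hfh z)).1]) x]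
  · linarith [infConv_le_infConv_add_of_le_add_right (h := f) hg hh.nonneg
      (fun z => by linarith [(abs_sub_le_iff.1 (hfh z)).2]) x]

lemma infConv_dist_one_left [MulOneClass X] [IsIsometricSMul Xᵐᵒᵖ X] (hf : IsKatetov f) :
    infConv (dist (1 : X)) f = f := by
  funext x
  refine le_antisymm ?_ (le_infConv fun y z hyz => ?_)
  · simpa using infConv_le (f := dist (1 : X)) (fun _ => dist_nonneg) hf.nonneg (one_mul x)
  · have : dist x z = dist 1 y := by rw [← hyz, dist_comm, ← dist_mul_right 1 y z, one_mul]
    linarith [hf.sub_le x z]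

lemma infConv_dist_one_right [MulOneClass X] [IsIsometricSMul X X] (hf : IsKatetov f) :
    infConv f (dist (1 : X)) = f := by
  funext x
  refine le_antisymm ?_ (le_infConv fun y z hyz => ?_)
  · simpa using infConv_le (g := dist (1 : X)) hf.nonneg (fun _ => dist_nonneg) (mul_one x)
  · have : dist x y = dist 1 z := by rw [← hyz, dist_comm, ← dist_mul_left y 1 z, mul_one]
    linarith [hf.sub_le x y]

section InvariantMetric

variable [Group X] [IsIsometricSMul X X]

lemma infConv_le_infConv_add_dist (hf : 0 ≤ f) (hg : IsKatetov g) (a b : X) :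
    infConv f g a ≤ infConv f g b + dist a b := by
  have : infConv f g a - dist a b ≤ infConv f g b := le_infConv fun y z hyz => by
    have hz : z = y⁻¹ * b := by rw [← hyz, inv_mul_cancel_left]
    have hdist : dist (y⁻¹ * a) z = dist a b := by rw [hz, dist_mul_left]
    linarith [infConv_le hf hg.nonneg (mul_inv_cancel_left y a), hg.sub_le (y⁻¹ * a) z]
  linarith

lemma dist_mul_mul_le_dist_add_dist [IsIsometricSMul Xᵐᵒᵖ X] (a a' b b' : X) :
    dist (a * b) (a' * b') ≤ dist a a' + dist b b' :=
  calc dist (a * b) (a' * b') ≤ dist (a * b) (a' * b) + dist (a' * b) (a' * b') :=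
        dist_triangle _ _ _
    _ = dist a a' + dist b b' := by rw [dist_mul_right, dist_mul_left]

lemma dist_le_infConv_add_infConv [IsIsometricSMul Xᵐᵒᵖ X] (hf : IsKatetov f) (hg : IsKatetov g)
    (x x' : X) : dist x x' ≤ infConv f g x + infConv f g x' := by
  have : dist x x' - infConv f g x' ≤ infConv f g x := le_infConv fun y z hyz => by
    have : dist x x' - (f y + g z) ≤ infConv f g x' := le_infConv fun y' z' hyz' => by
      subst hyz hyz'
      linarith [dist_mul_mul_le_dist_add_dist y y' z z', (hf y y').2, (hg z z').2]
    linarith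
  linarith

lemma IsKatetov.infConv [IsIsometricSMul Xᵐᵒᵖ X] (hf : IsKatetov f) (hg : IsKatetov g) :
    IsKatetov (infConv f g) :=
  fun x x' => ⟨abs_sub_le_iff.2 ⟨by linarith [infConv_le_infConv_add_dist hf.nonneg hg x x'],
    by linarith [infConv_le_infConv_add_dist hf.nonneg hg x' x, dist_comm x x']⟩,
    dist_le_infConv_add_infConv hf hg x x'⟩

end InvariantMetric

end Katetov

/-- on a metric invariant group, (i) the inf-convolution of two Katetov
maps is Katetov; (ii) `(𝒦(X), ⊕)` is a monoid with identity `δ_e = d(1,·)`,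
commutative whenever `X` is; (iii) `d_∞(f ⊕ g, h ⊕ g) ≤ d_∞(f, h)` and
`d_∞(g ⊕ f, g ⊕ h) ≤ d_∞(f, h)`. -/
theorem katetov_monoid {X : Type*} [Group X] [MetricSpace X]
    (hleft : ∀ x y z : X, dist (x * y) (x * z) = dist y z)
    (hright : ∀ x y z : X, dist (y * x) (z * x) = dist y z) :
    (∀ f g : X → ℝ, IsKatetov f → IsKatetov g → IsKatetov (infConv f g)) ∧
    (∀ f g h : X → ℝ, IsKatetov f → IsKatetov g → IsKatetov h →
       infConv (infConv f g) h = infConv f (infConv g h)) ∧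
    (∀ f : X → ℝ, IsKatetov f →
       infConv (fun x => dist (1 : X) x) f = f ∧ infConv f (fun x => dist (1 : X) x) = f) ∧
    ((∀ x y : X, x * y = y * x) →
       ∀ f g : X → ℝ, IsKatetov f → IsKatetov g → infConv f g = infConv g f) ∧
    (∀ f g h : X → ℝ, IsKatetov f → IsKatetov g → IsKatetov h →
       dInf (infConv f g) (infConv h g) ≤ dInf f h ∧
       dInf (infConv g f) (infConv g h) ≤ dInf f h) := by
  have : IsIsometricSMul X X := ⟨fun c => Isometry.of_dist_eq (hleft c)⟩
  have : IsIsometricSMul Xᵐᵒᵖ X := ⟨fun c => Isometry.of_dist_eq (hright c.unop)⟩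
  exact ⟨fun _ _ hf hg => hf.infConv hg,
    fun _ _ _ hf hg hh => infConv_assoc hf.nonneg hg.nonneg hh.nonneg,
    fun _ hf => ⟨infConv_dist_one_left hf, infConv_dist_one_right hf⟩,
    fun hc f g _ _ => infConv_comm hc f g,
    fun _ _ _ hf hg hh =>
      ⟨dInf_infConv_right_le hf hg.nonneg hh, dInf_infConv_left_le hf hg.nonneg hh⟩⟩
end

section
/- Let (X,·,d) be a group which is complete and metric invariant, with identity element e. Then a Katetov map f ∈ 𝒦(X) is invertible in the monoid (𝒦(X), ⊕) (i.e. there exists g ∈ 𝒦(X) with f ⊕ g = g ⊕ f = δ_e) if and only if f = δ_a = d(a,·) for some a ∈ X. Hence the group of units of (𝒦(X), ⊕) is X̂ = { d(a,·) : a ∈ X }, which is isometrically isomorphic to X. -/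
/-!
A Katetov map `f` satisfies `d(x, y) ≤ f x + f y`, so its approximate zeros form a Cauchy
sequence; in a complete space the limit `a` is a zero of `f`, and a Katetov map vanishing at `a`
is `δ_a`. If `f ⊕ g = δ_e` then `(f ⊕ g)(e) = 0` and `g ≥ 0` force `inf f = 0`, so `f = δ_a`.
Conversely, bi-invariance of `d` gives `δ_a ⊕ δ_b = δ_{ab}`, so `δ_{a⁻¹}` inverts `δ_a`.
-/

open Filter Topology

namespace IsKatetov

variable {X : Type*} [MetricSpace X] {f : X → ℝ}

lemma nonneg_s15 (hf : IsKatetov f) (x : X) : 0 ≤ f x := by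
  linarith [(hf x x).2, dist_self x]

lemma lipschitzWith_one (hf : IsKatetov f) : LipschitzWith 1 f :=
  LipschitzWith.of_le_add fun x y => by linarith [(abs_le.mp (hf x y).1).2]

lemma eq_dist_of_eq_zero (hf : IsKatetov f) {a : X} (ha : f a = 0) : f = fun x => dist a x := by
  funext x
  have hle := (abs_le.mp (hf x a).1).2
  have hge := (hf x a).2
  rw [ha, dist_comm] at hle hge
  linarith

lemma exists_eq_zero [CompleteSpace X] (hf : IsKatetov f) (h : ∀ ε > 0, ∃ x, f x < ε) :
    ∃ a, f a = 0 := by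
  choose u hu using fun n : ℕ => h (1 / (n + 1)) Nat.one_div_pos_of_nat
  have hfu : Tendsto (f ∘ u) atTop (𝓝 0) :=
    squeeze_zero (fun n => hf.nonneg_s15 _) (fun n => (hu n).le)
      tendsto_one_div_add_atTop_nhds_zero_nat
  have hcauchy : CauchySeq u := by
    refine cauchySeq_of_le_tendsto_0' (fun n : ℕ => 2 * (1 / ((n : ℝ) + 1))) (fun n m hnm => ?_)
      (by simpa using tendsto_one_div_add_atTop_nhds_zero_nat.const_mul (2 : ℝ))
    have := Nat.one_div_le_one_div (α := ℝ) hnm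
    linarith [(hf (u n) (u m)).2, hu n, hu m]
  obtain ⟨a, ha⟩ := cauchySeq_tendsto_of_complete hcauchy
  exact ⟨a, tendsto_nhds_unique ((hf.lipschitzWith_one.continuous.tendsto a).comp ha) hfu⟩

end IsKatetov

lemma isKatetov_dist {X : Type*} [MetricSpace X] (a : X) : IsKatetov fun x => dist a x := by
  intro x y
  refine ⟨by simpa only [dist_comm a] using abs_dist_sub_le x y a, ?_⟩
  simpa only [dist_comm x a] using dist_triangle x a y

lemma dInf_dist_dist {X : Type*} [MetricSpace X] (a b : X) :
    dInf (fun x => dist a x) (fun x => dist b x) = dist a b := by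
  have : Nonempty X := ⟨a⟩
  have bound : ∀ x, |dist a x - dist b x| ≤ dist a b := abs_dist_sub_le a b
  refine le_antisymm (ciSup_le bound) ?_
  simpa [dInf, abs_of_nonneg dist_nonneg] using le_ciSup ⟨dist a b, Set.forall_mem_range.2 bound⟩ b

lemma exists_add_lt_of_infConv_lt {X : Type*} [MulOneClass X] {f g : X → ℝ} {x : X} {r : ℝ}
    (h : infConv f g x < r) :
    ∃ y z, y * z = x ∧ f y + g z < r := by
  obtain ⟨_, ⟨y, z, hyz, rfl⟩, hr⟩ :=
    exists_lt_of_csInf_lt (s := {r | ∃ y z : X, y * z = x ∧ r = f y + g z})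
      ⟨f x + g 1, x, 1, mul_one x, rfl⟩ h
  exact ⟨y, z, hyz, hr⟩

lemma infConv_dist {X : Type*} [Group X] [MetricSpace X]
    (hleft : ∀ x y z : X, dist (x * y) (x * z) = dist y z)
    (hright : ∀ x y z : X, dist (y * x) (z * x) = dist y z) (a b : X) :
    infConv (fun x => dist a x) (fun x => dist b x) = fun x => dist (a * b) x := by
  funext x
  refine IsLeast.csInf_eq ⟨⟨a, a⁻¹ * x, mul_inv_cancel_left a x, ?_⟩, ?_⟩
  · show dist (a * b) x = dist a a + dist b (a⁻¹ * x)
    rw [dist_self, zero_add, ← hleft a b, mul_inv_cancel_left]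
  · rintro _ ⟨y, z, rfl, rfl⟩
    calc dist (a * b) (y * z) ≤ dist (a * b) (y * b) + dist (y * b) (y * z) := dist_triangle _ _ _
      _ = dist a y + dist b z := by rw [hright, hleft]

/-- on a complete metric invariant group, a Katetov map `f` is
invertible in the monoid `(𝒦(X), ⊕)` iff `f = δ_a = d(a,·)` for some `a ∈ X`; hence
the group of units of `(𝒦(X), ⊕)` is `X̂ = {d(a,·) : a ∈ X}`, which is isometrically
isomorphic to `X` via `a ↦ δ_a`. -/
theorem katetov_units {X : Type*} [Group X] [MetricSpace X] [CompleteSpace X]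
    (hleft : ∀ x y z : X, dist (x * y) (x * z) = dist y z)
    (hright : ∀ x y z : X, dist (y * x) (z * x) = dist y z) :
    (∀ f : X → ℝ, IsKatetov f →
       ((∃ g : X → ℝ, IsKatetov g ∧ infConv f g = (fun x => dist (1 : X) x) ∧
           infConv g f = (fun x => dist (1 : X) x)) ↔
        ∃ a : X, f = fun x => dist a x)) ∧
    (∀ a b : X, infConv (fun x => dist a x) (fun x => dist b x) = fun x => dist (a * b) x) ∧
    (∀ a b : X, dInf (fun x => dist a x) (fun x => dist b x) = dist a b) := by
  refine ⟨fun f hf => ⟨?_, ?_⟩, infConv_dist hleft hright, dInf_dist_dist⟩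
  · rintro ⟨g, hg, hfg, -⟩
    have hinf : ∀ ε > 0, ∃ y, f y < ε := fun ε hε => by
      have h1 : infConv f g 1 < ε := by simpa [hfg] using hε
      obtain ⟨y, z, -, hyz⟩ := exists_add_lt_of_infConv_lt h1
      exact ⟨y, by linarith [hg.nonneg_s15 z]⟩
    obtain ⟨a, ha⟩ := hf.exists_eq_zero hinf
    exact ⟨a, hf.eq_dist_of_eq_zero ha⟩
  · rintro ⟨a, rfl⟩
    refine ⟨fun x => dist a⁻¹ x, isKatetov_dist a⁻¹, ?_, ?_⟩
    · rw [infConv_dist hleft hright, mul_inv_cancel]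
    · rw [infConv_dist hleft hright, inv_mul_cancel]
end
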